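/- If the market is highly competitive, i.e., |μ^MR(c) ∩ S^m| ≤ q_c^R for every school c, then μ^JSA weakly dominates μ^MR for disadvantaged students: μ^JSA(s) ≥_s μ^MR(s) for every disadvantaged student s ∈ S^m. -/

import Mathlib

/-!
Common formalization of school-choice instances with reserved seats
(minority reserve, joint seat allocation, discovery program).

Conventions:
* `prio c s` is the priority rank of student `s` at school `c`
  (smaller value = higher priority); injectivity encodes a strict priority order.
* `pref s o` is the preference rank of outcome `o : Option C` for student `s`
  (smaller value = more preferred); `none` denotes being unmatched, and a school
  `c` is acceptable to `s` iff `pref s (some c) < pref s none`.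
-/

open Finset

structure SchoolChoice (S C : Type*) [Fintype S] [DecidableEq S] [Fintype C] [DecidableEq C] where
  /-- the set of disadvantaged (minority) students; the rest are advantaged -/
  dis : Finset S
  /-- preference rank of each outcome (school or `none` = unmatched) for each student -/
  pref : S → Option C → ℕ
  pref_inj : ∀ s, Function.Injective (pref s)
  /-- priority rank of each student at each school (lower = higher priority) -/
  prio : C → S → ℕ
  prio_inj : ∀ c, Function.Injective (prio c)
  /-- quota of each school -/
  q : C → ℕ
  /-- reservation quota of each school -/
  qR : C → ℕ
  qR_le : ∀ c, qR c ≤ q c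

namespace SchoolChoice

variable {S C : Type*} [Fintype S] [DecidableEq S] [Fintype C] [DecidableEq C]

/-- `max(T, >_c, k)`: the `min(k, |T|)` highest-priority students of `T` at school `c`. -/
def maxSet (I : SchoolChoice S C) (c : C) (T : Finset S) (k : ℕ) : Finset S :=
  T.filter fun s => (T.filter fun t => I.prio c t < I.prio c s).card < k

/-- baseline choice function `C^BASE_c` -/
def CBASE (I : SchoolChoice S C) (c : C) (T : Finset S) : Finset S :=
  I.maxSet c T (I.q c)

/-- `S1^R` of the minority-reserve choice function -/
def mrRes (I : SchoolChoice S C) (c : C) (T : Finset S) : Finset S :=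
  I.maxSet c (T ∩ I.dis) (I.qR c)

/-- minority-reserve choice function `C^MR_c` -/
def CMR (I : SchoolChoice S C) (c : C) (T : Finset S) : Finset S :=
  I.mrRes c T ∪ I.maxSet c (T \ I.mrRes c T) (I.q c - (I.mrRes c T).card)

/-- `S1^G` of the joint-seat-allocation choice function -/
def jsaGen (I : SchoolChoice S C) (c : C) (T : Finset S) : Finset S :=
  I.maxSet c T (I.q c - I.qR c)

/-- `S1^R` of the joint-seat-allocation choice function -/
def jsaRes (I : SchoolChoice S C) (c : C) (T : Finset S) : Finset S :=
  I.maxSet c ((T ∩ I.dis) \ I.jsaGen c T) (I.qR c)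

/-- joint-seat-allocation choice function `C^JSA_c` -/
def CJSA (I : SchoolChoice S C) (c : C) (T : Finset S) : Finset S :=
  I.jsaGen c T ∪ I.jsaRes c T ∪
    I.maxSet c (T \ (I.jsaGen c T ∪ I.jsaRes c T))
      (I.q c - (I.jsaGen c T ∪ I.jsaRes c T).card)

/-- school `c` is acceptable to student `s` -/
def acceptable (I : SchoolChoice S C) (s : S) (c : C) : Prop :=
  I.pref s (some c) < I.pref s none

/-- `μ(c)`: the set of students assigned to school `c` by `μ` -/
def assigned (I : SchoolChoice S C) (μ : S → Option C) (c : C) : Finset S :=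
  Finset.univ.filter fun s => μ s = some c

/-- `μ` is a matching: students are assigned only acceptable schools, quotas respected -/
def IsMatching (I : SchoolChoice S C) (μ : S → Option C) : Prop :=
  (∀ s c, μ s = some c → I.acceptable s c) ∧ ∀ c, (I.assigned μ c).card ≤ I.q c

/-- `μ` is stable w.r.t. the choice functions `Ch`: it is a matching and no pair
`(s, c)` with `c` acceptable to `s` satisfies `c >_s μ(s)` and `s ∈ Ch c (μ(c) ∪ {s})`. -/
def IsStable (I : SchoolChoice S C) (Ch : C → Finset S → Finset S) (μ : S → Option C) : Prop :=
  I.IsMatching μ ∧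
    ∀ s c, I.acceptable s c → I.pref s (some c) < I.pref s (μ s) →
      s ∉ Ch c (insert s (I.assigned μ c))

/-- `μ` is the student-optimal stable matching w.r.t. `Ch`:
stable and weakly preferred by every student to every stable matching. -/
def IsOptStable (I : SchoolChoice S C) (Ch : C → Finset S → Finset S) (μ : S → Option C) :
    Prop :=
  I.IsStable Ch μ ∧ ∀ μ', I.IsStable Ch μ' → ∀ s, I.pref s (μ s) ≤ I.pref s (μ' s)

/-! Restricted (sub)instances, used by the three-stage discovery program: only students
in `A` participate and school `c` has quota `q' c`, with baseline (responsive) choice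
functions. -/

def IsMatchingOn (I : SchoolChoice S C) (A : Finset S) (q' : C → ℕ) (μ : S → Option C) :
    Prop :=
  (∀ s, s ∉ A → μ s = none) ∧
    (∀ s c, μ s = some c → I.acceptable s c) ∧ ∀ c, (I.assigned μ c).card ≤ q' c

def IsStableOn (I : SchoolChoice S C) (A : Finset S) (q' : C → ℕ) (μ : S → Option C) : Prop :=
  I.IsMatchingOn A q' μ ∧
    ∀ s ∈ A, ∀ c : C, I.acceptable s c → I.pref s (some c) < I.pref s (μ s) →
      s ∉ I.maxSet c (insert s (I.assigned μ c)) (q' c)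

def IsOptStableOn (I : SchoolChoice S C) (A : Finset S) (q' : C → ℕ) (μ : S → Option C) :
    Prop :=
  I.IsStableOn A q' μ ∧
    ∀ μ', I.IsStableOn A q' μ' → ∀ s ∈ A, I.pref s (μ s) ≤ I.pref s (μ' s)

/-- `μ` is the discovery-program matching: the union of the three stage matchings
`μ1` (general seats, all students), `μ2` (reserved seats, unmatched disadvantaged
students), `μ3` (vacant reserved seats, unmatched advantaged students). -/
def IsDisc (I : SchoolChoice S C) (μ : S → Option C) : Prop :=
  ∃ μ1 μ2 μ3 : S → Option C,
    I.IsOptStableOn Finset.univ (fun c => I.q c - I.qR c) μ1 ∧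
    I.IsOptStableOn (I.dis.filter fun s => μ1 s = none) I.qR μ2 ∧
    I.IsOptStableOn ((Finset.univ \ I.dis).filter fun s => μ1 s = none)
      (fun c => I.qR c - (I.assigned μ2 c).card) μ3 ∧
    ∀ s, μ s = Option.elim (μ1 s) (Option.elim (μ2 s) (μ3 s) some) some

/-- `(s, c)` is a blocking pair of `μ` for disadvantaged students -/
def BlockDis (I : SchoolChoice S C) (μ : S → Option C) (s : S) (c : C) : Prop :=
  s ∈ I.dis ∧ I.acceptable s c ∧ I.pref s (some c) < I.pref s (μ s) ∧
    ∃ s' ∈ I.assigned μ c, s' ∈ I.dis ∧ I.prio c s < I.prio c s'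

/-- `(s, c)` is a blocking pair of `μ` for advantaged students -/
def BlockAdv (I : SchoolChoice S C) (μ : S → Option C) (s : S) (c : C) : Prop :=
  s ∉ I.dis ∧ I.acceptable s c ∧ I.pref s (some c) < I.pref s (μ s) ∧
    ∃ s' ∈ I.assigned μ c, s' ∉ I.dis ∧ I.prio c s < I.prio c s'

/-- `(s, c)` is an in-group blocking pair of `μ` -/
def InGroupBlock (I : SchoolChoice S C) (μ : S → Option C) (s : S) (c : C) : Prop :=
  I.BlockDis μ s c ∨ I.BlockAdv μ s c

/-- all schools share a common priority order over the students -/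
def CommonPriority (I : SchoolChoice S C) : Prop :=
  ∀ c c' : C, ∀ t u : S, I.prio c t < I.prio c u ↔ I.prio c' t < I.prio c' u

/-- the reservation quotas are a smart reserve w.r.t. the baseline matching `μBase` -/
def SmartReserve (I : SchoolChoice S C) (μBase : S → Option C) : Prop :=
  ∀ c, (I.assigned μBase c ∩ I.dis).card ≤ I.qR c

end SchoolChoice

/-!
Run student-proposing deferred acceptance under `C^JSA`, encoded as a maximal cumulative-offer
state `A` (`A c` is the set of students who have proposed to `c`). Its outcome is `C^JSA`-stable,
so every student weakly prefers `μ^JSA` to it, and it suffices that the run never rejects a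
disadvantaged student `u` at a school `c` with `μ^MR(u) ≥_u c`. At the first such rejection
`u` proposed to `c` after being rejected by every school she prefers, so `μ^MR(u) = c`, and
`C^JSA` rejects her only in favour of `q_c^R` disadvantaged proposers of higher priority. None
of them has been rejected by her `μ^MR`-school yet, so each weakly prefers `c` to it; one who
strictly prefers `c` would, by `C^MR`-stability and `|μ^MR(c) ∩ S^m| ≤ q_c^R`, rank below `u`.
Hence all of them, and `u`, lie in `μ^MR(c) ∩ S^m`, which then has more than `q_c^R` members.
-/

lemma exists_option_eq_some_iff {α β : Type*} (R : α → β → Prop)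
    (hR : ∀ a b b', R a b → R a b' → b = b') :
    ∃ f : α → Option β, ∀ a b, f a = some b ↔ R a b := by
  classical
  refine ⟨fun a => if h : ∃ b, R a b then some h.choose else none, fun a b => ?_⟩
  by_cases h : ∃ b, R a b
  · simp only [dif_pos h, Option.some_inj]
    exact ⟨fun e => e ▸ h.choose_spec, fun hb => hR a _ _ h.choose_spec hb⟩
  · simp only [dif_neg h, reduceCtorEq, false_iff]
    exact fun hb => h ⟨b, hb⟩

lemma Finset.mem_update_insert {ι α : Type*} [DecidableEq ι] [DecidableEq α]
    {f : ι → Finset α} {i j : ι} {a b : α} :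
    b ∈ Function.update f i (insert a (f i)) j ↔ j = i ∧ b = a ∨ b ∈ f j := by
  rcases eq_or_ne j i with rfl | hj <;> simp [*]

lemma Finset.le_update_insert {ι α : Type*} [DecidableEq ι] [DecidableEq α]
    {f : ι → Finset α} {i : ι} {a : α} : f ≤ Function.update f i (insert a (f i)) :=
  le_update_self_iff.2 (subset_insert _ _)

namespace SchoolChoice

variable {S C : Type*} [Fintype S] [DecidableEq S] [Fintype C] [DecidableEq C]
  {I : SchoolChoice S C} {c c₀ : C} {T T' : Finset S} {k k' : ℕ} {s t u : S}

section MaxSet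

variable (I) in
def rank (c : C) (T : Finset S) (s : S) : ℕ :=
  #(T.filter fun t => I.prio c t < I.prio c s)

lemma mem_maxSet : s ∈ I.maxSet c T k ↔ s ∈ T ∧ I.rank c T s < k := mem_filter

lemma maxSet_subset : I.maxSet c T k ⊆ T := filter_subset _ _

lemma rank_mono (h : T' ⊆ T) : I.rank c T' s ≤ I.rank c T s :=
  card_le_card (filter_subset_filter _ h)

lemma rank_lt_rank (hs : s ∈ T) (h : I.prio c s < I.prio c t) : I.rank c T s < I.rank c T t := by
  have hsub : (T.filter fun x => I.prio c x < I.prio c s) ⊆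
      T.filter fun x => I.prio c x < I.prio c t :=
    fun x hx => mem_filter.2 ⟨(mem_filter.1 hx).1, (mem_filter.1 hx).2.trans h⟩
  refine card_lt_card ((ssubset_iff_of_subset hsub).2 ⟨s, mem_filter.2 ⟨hs, h⟩, ?_⟩)
  simp

lemma rank_lt_card (hs : s ∈ T) : I.rank c T s < #T :=
  card_lt_card (filter_ssubset.2 ⟨s, hs, lt_irrefl _⟩)

lemma rank_injOn : Set.InjOn (I.rank c T) T := by
  intro a ha b hb hab
  rcases lt_trichotomy (I.prio c a) (I.prio c b) with h | h | h
  · exact absurd hab (rank_lt_rank ha h).ne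
  · exact I.prio_inj c h
  · exact absurd hab (rank_lt_rank hb h).ne'

lemma image_rank : T.image (I.rank c T) = range #T := by
  refine eq_of_subset_of_card_le (fun n hn => ?_) ?_
  · obtain ⟨s, hs, rfl⟩ := mem_image.1 hn
    exact mem_range.2 (rank_lt_card hs)
  · rw [card_range, card_image_of_injOn rank_injOn]

lemma card_maxSet : #(I.maxSet c T k) = min k #T := by
  have hinj : Set.InjOn (I.rank c T) (I.maxSet c T k) :=
    rank_injOn.mono (coe_subset.2 maxSet_subset)
  calc #(I.maxSet c T k) = #((I.maxSet c T k).image (I.rank c T)) := (card_image_of_injOn hinj).symm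
    _ = #((range #T).filter (· < k)) := by rw [← image_rank (I := I) (c := c), filter_image]; rfl
    _ = min k #T := by
      rw [← card_range (min k #T)]
      congr 1
      ext n
      simp [and_comm]

lemma card_maxSet_le : #(I.maxSet c T k) ≤ k := card_maxSet.trans_le (min_le_left _ _)

lemma mem_maxSet_of_subset (hT : T' ⊆ T) (hk : k ≤ k') (hs : s ∈ I.maxSet c T k)
    (hs' : s ∈ T') : s ∈ I.maxSet c T' k' :=
  mem_maxSet.2 ⟨hs', ((rank_mono hT).trans_lt (mem_maxSet.1 hs).2).trans_le hk⟩

lemma prio_lt_of_mem_maxSet_of_notMem (ht : t ∈ I.maxSet c T k) (hs : s ∈ T)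
    (hs' : s ∉ I.maxSet c T k) : I.prio c t < I.prio c s := by
  rcases lt_trichotomy (I.prio c t) (I.prio c s) with h | h | h
  · exact h
  · exact absurd (I.prio_inj c h ▸ ht) hs'
  · exact absurd (mem_maxSet.2 ⟨hs, (rank_lt_rank hs h).trans (mem_maxSet.1 ht).2⟩) hs'

lemma maxSet_eq_of_subset (h : I.maxSet c T k ⊆ T') (hT : T' ⊆ T) :
    I.maxSet c T' k = I.maxSet c T k := by
  refine Subset.antisymm (fun s hs => ?_) (fun s hs => mem_maxSet_of_subset hT le_rfl hs (h hs))
  by_contra hs'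
  have hsT : s ∈ T := hT (maxSet_subset hs)
  have hk : k ≤ I.rank c T s := not_lt.1 fun hk => hs' (mem_maxSet.2 ⟨hsT, hk⟩)
  have hcard : #(I.maxSet c T k) = k := by
    rw [card_maxSet]
    exact min_eq_left (hk.trans (rank_lt_card hsT).le)
  have habove : I.maxSet c T k ⊆ T'.filter fun t => I.prio c t < I.prio c s :=
    fun t ht => mem_filter.2 ⟨h ht, prio_lt_of_mem_maxSet_of_notMem ht hsT hs'⟩
  exact (mem_maxSet.1 hs).2.not_ge (hcard ▸ card_le_card habove)

end MaxSet

section JointSeatAllocation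

lemma jsaRes_subset : I.jsaRes c T ⊆ (T ∩ I.dis) \ I.jsaGen c T := maxSet_subset

lemma CJSA_subset : I.CJSA c T ⊆ T :=
  union_subset
    (union_subset maxSet_subset (jsaRes_subset.trans (sdiff_subset.trans inter_subset_left)))
    (maxSet_subset.trans sdiff_subset)

lemma disjoint_jsaGen_jsaRes : Disjoint (I.jsaGen c T) (I.jsaRes c T) :=
  disjoint_left.2 fun _ hG hR => (mem_sdiff.1 (jsaRes_subset hR)).2 hG

lemma card_jsaGen_union_jsaRes :
    #(I.jsaGen c T ∪ I.jsaRes c T) = #(I.jsaGen c T) + #(I.jsaRes c T) :=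
  card_union_of_disjoint disjoint_jsaGen_jsaRes

lemma card_jsaGen_union_jsaRes_le : #(I.jsaGen c T ∪ I.jsaRes c T) ≤ I.q c := by
  have := I.qR_le c
  have : #(I.jsaGen c T) ≤ I.q c - I.qR c := card_maxSet_le
  have : #(I.jsaRes c T) ≤ I.qR c := card_maxSet_le
  rw [card_jsaGen_union_jsaRes]
  omega

lemma card_CJSA_le : #(I.CJSA c T) ≤ I.q c := by
  have := card_jsaGen_union_jsaRes_le (I := I) (c := c) (T := T)
  have := (card_union_le _ _).trans (Nat.add_le_add_left
    (card_maxSet_le (I := I) (c := c) (T := T \ (I.jsaGen c T ∪ I.jsaRes c T))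
      (k := I.q c - #(I.jsaGen c T ∪ I.jsaRes c T))) #(I.jsaGen c T ∪ I.jsaRes c T))
  exact this.trans (by omega)

lemma qR_le_rank_of_notMem_CJSA (hs : s ∈ I.dis) (hsT : s ∈ T) (hrej : s ∉ I.CJSA c T) :
    I.qR c ≤ I.rank c (T ∩ I.dis) s := by
  have hG : s ∉ I.jsaGen c T := fun h => hrej (mem_union_left _ (mem_union_left _ h))
  have hR : s ∉ I.jsaRes c T := fun h => hrej (mem_union_left _ (mem_union_right _ h))
  have : I.qR c ≤ I.rank c ((T ∩ I.dis) \ I.jsaGen c T) s :=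
    not_lt.1 fun h => hR (mem_maxSet.2 ⟨mem_sdiff.2 ⟨mem_inter.2 ⟨hsT, hs⟩, hG⟩, h⟩)
  exact this.trans (rank_mono sdiff_subset)

lemma mem_jsaGen_of_subset (hT : T' ⊆ T) (hs : s ∈ I.jsaGen c T) (hs' : s ∈ T') :
    s ∈ I.jsaGen c T' :=
  mem_maxSet_of_subset hT le_rfl hs hs'

lemma jsaRes_ground_subset (hT : T' ⊆ T) :
    (T' ∩ I.dis) \ I.jsaGen c T' ⊆ (T ∩ I.dis) \ I.jsaGen c T := by
  intro x hx
  obtain ⟨hx, hxG⟩ := mem_sdiff.1 hx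
  exact mem_sdiff.2 ⟨inter_subset_inter hT Subset.rfl hx,
    fun h => hxG (mem_jsaGen_of_subset hT h (mem_inter.1 hx).1)⟩

lemma mem_jsaGen_union_jsaRes_of_subset (hT : T' ⊆ T)
    (hs : s ∈ I.jsaGen c T ∪ I.jsaRes c T) (hs' : s ∈ T') :
    s ∈ I.jsaGen c T' ∪ I.jsaRes c T' := by
  rcases mem_union.1 hs with hG | hR
  · exact mem_union_left _ (mem_jsaGen_of_subset hT hG hs')
  by_cases hG' : s ∈ I.jsaGen c T'
  · exact mem_union_left _ hG'
  have hdis : s ∈ I.dis := (mem_inter.1 (mem_sdiff.1 (jsaRes_subset hR)).1).2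
  exact mem_union_right _ (mem_maxSet_of_subset (jsaRes_ground_subset hT) le_rfl hR
    (mem_sdiff.2 ⟨mem_inter.2 ⟨hs', hdis⟩, hG'⟩))

lemma card_jsaGen_union_jsaRes_mono (hT : T' ⊆ T) :
    #(I.jsaGen c T' ∪ I.jsaRes c T') ≤ #(I.jsaGen c T ∪ I.jsaRes c T) := by
  have hG : #(I.jsaGen c T') ≤ #(I.jsaGen c T) := by
    rw [jsaGen, jsaGen, card_maxSet, card_maxSet]
    exact min_le_min_left _ (card_le_card hT)
  have hR : #(I.jsaRes c T') ≤ #(I.jsaRes c T) := by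
    rw [jsaRes, jsaRes, card_maxSet, card_maxSet]
    exact min_le_min_left _ (card_le_card (jsaRes_ground_subset hT))
  rw [card_jsaGen_union_jsaRes, card_jsaGen_union_jsaRes]
  omega

/-- Substitutability of `C^JSA`. -/
lemma mem_CJSA_of_subset (hT : T' ⊆ T) (hs : s ∈ I.CJSA c T) (hs' : s ∈ T') :
    s ∈ I.CJSA c T' := by
  rcases mem_union.1 hs with hGR | hrest
  · exact mem_union_left _ (mem_jsaGen_union_jsaRes_of_subset hT hGR hs')
  by_cases hGR' : s ∈ I.jsaGen c T' ∪ I.jsaRes c T'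
  · exact mem_union_left _ hGR'
  have hsub : T' \ (I.jsaGen c T' ∪ I.jsaRes c T') ⊆ T \ (I.jsaGen c T ∪ I.jsaRes c T) := by
    intro x hx
    obtain ⟨hxT', hx⟩ := mem_sdiff.1 hx
    exact mem_sdiff.2 ⟨hT hxT', fun h => hx (mem_jsaGen_union_jsaRes_of_subset hT h hxT')⟩
  exact mem_union_right _ (mem_maxSet_of_subset hsub
    (Nat.sub_le_sub_left (card_jsaGen_union_jsaRes_mono hT) _) hrest (mem_sdiff.2 ⟨hs', hGR'⟩))

/-- Consistency of `C^JSA`. -/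
lemma CJSA_eq_of_subset (h : I.CJSA c T ⊆ T') (hT : T' ⊆ T) : I.CJSA c T' = I.CJSA c T := by
  have hG : I.jsaGen c T' = I.jsaGen c T :=
    maxSet_eq_of_subset ((subset_union_left.trans subset_union_left).trans h) hT
  have hR : I.jsaRes c T' = I.jsaRes c T := by
    rw [jsaRes, jsaRes, hG]
    refine maxSet_eq_of_subset (fun x hx => ?_)
      (sdiff_subset_sdiff (inter_subset_inter hT Subset.rfl) Subset.rfl)
    obtain ⟨hx', hxG⟩ := mem_sdiff.1 (maxSet_subset hx)
    exact mem_sdiff.2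
      ⟨mem_inter.2 ⟨h (mem_union_left _ (mem_union_right _ hx)), (mem_inter.1 hx').2⟩, hxG⟩
  rw [CJSA, CJSA, hG, hR]
  congr 1
  exact maxSet_eq_of_subset (fun x hx => mem_sdiff.2 ⟨h (mem_union_right _ hx),
    (mem_sdiff.1 (maxSet_subset hx)).2⟩) (sdiff_subset_sdiff hT Subset.rfl)

end JointSeatAllocation

lemma prio_lt_of_isStable_CMR {μ : S → Option C} (hμ : I.IsStable I.CMR μ)
    (hc : #(I.assigned μ c ∩ I.dis) ≤ I.qR c) (ht : t ∈ I.dis) (hacc : I.acceptable t c)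
    (hpref : I.pref t (some c) < I.pref t (μ t)) (hu : u ∈ I.assigned μ c ∩ I.dis) :
    I.prio c u < I.prio c t := by
  have hrej : t ∉ I.mrRes c (insert t (I.assigned μ c)) :=
    fun h => hμ.2 t c hacc hpref (mem_union_left _ h)
  have hqR : I.qR c ≤ I.rank c (insert t (I.assigned μ c) ∩ I.dis) t :=
    not_lt.1 fun h => hrej (mem_maxSet.2 ⟨mem_inter.2 ⟨mem_insert_self _ _, ht⟩, h⟩)
  by_contra! htu
  have hsub : (insert t (I.assigned μ c) ∩ I.dis).filter (fun x => I.prio c x < I.prio c t) ⊆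
      (I.assigned μ c ∩ I.dis).erase u := by
    intro x hx
    obtain ⟨hx, hxt⟩ := mem_filter.1 hx
    obtain ⟨hx, hxdis⟩ := mem_inter.1 hx
    have hxA := (mem_insert.1 hx).resolve_left (by rintro rfl; exact lt_irrefl _ hxt)
    exact mem_erase.2
      ⟨by rintro rfl; exact (hxt.trans_le htu).false, mem_inter.2 ⟨hxA, hxdis⟩⟩
  have hcard :
      I.rank c (insert t (I.assigned μ c) ∩ I.dis) t ≤ #(I.assigned μ c ∩ I.dis) - 1 :=
    card_erase_of_mem hu ▸ card_le_card hsub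
  have := card_pos.2 ⟨u, hu⟩
  omega

section CumulativeOffer

variable {A A' : C → Finset S} {μ ν : S → Option C}

variable (I) in
def RejectedAbove (A : C → Finset S) (s : S) (c : C) : Prop :=
  ∀ c', I.acceptable s c' → I.pref s (some c') < I.pref s (some c) →
    s ∈ A c' ∧ s ∉ I.CJSA c' (A c')

variable (I) in
/-- `A c` is the set of students who have proposed to `c` so far in a run of student-proposing
deferred acceptance under `C^JSA`. -/
def IsOfferState (A : C → Finset S) : Prop :=
  ∀ c, ∀ s ∈ A c, I.acceptable s c ∧ I.RejectedAbove A s c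

variable (I) in
def CanPropose (A : C → Finset S) (s : S) (c : C) : Prop :=
  I.acceptable s c ∧ s ∉ A c ∧ I.RejectedAbove A s c

variable (I) in
def RejectsDisOnlyAbove (μ : S → Option C) (c : C) (T : Finset S) : Prop :=
  ∀ s ∈ T, s ∈ I.dis → s ∉ I.CJSA c T → I.pref s (some c) < I.pref s (μ s)

lemma RejectedAbove.mono (hA : A ≤ A') (h : I.RejectedAbove A s c) : I.RejectedAbove A' s c :=
  fun c' hacc hlt =>
    have ⟨hs, hrej⟩ := h c' hacc hlt
    ⟨hA c' hs, fun h' => hrej (mem_CJSA_of_subset (hA c') h' hs)⟩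

lemma IsOfferState.update (hA : I.IsOfferState A) (hs : I.CanPropose A s c₀) :
    I.IsOfferState (Function.update A c₀ (insert s (A c₀))) := by
  intro c t ht
  rcases Finset.mem_update_insert.1 ht with ⟨rfl, rfl⟩ | ht
  · exact ⟨hs.1, hs.2.2.mono Finset.le_update_insert⟩
  · exact ⟨(hA c t ht).1, (hA c t ht).2.mono Finset.le_update_insert⟩

lemma IsOfferState.eq_of_mem_CJSA (hA : I.IsOfferState A) (h : s ∈ I.CJSA c (A c))
    (h' : s ∈ I.CJSA c₀ (A c₀)) : c = c₀ := by
  rcases lt_trichotomy (I.pref s (some c)) (I.pref s (some c₀)) with hlt | heq | hlt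
  · exact absurd h ((hA c₀ s (CJSA_subset h')).2 c (hA c s (CJSA_subset h)).1 hlt).2
  · exact Option.some_injective _ (I.pref_inj s heq)
  · exact absurd h' ((hA c s (CJSA_subset h)).2 c₀ (hA c₀ s (CJSA_subset h')).1 hlt).2

lemma IsOfferState.pref_le_of_forall_ne (hA : I.IsOfferState A) (hμ : I.IsMatching μ)
    (hother : ∀ c ≠ c₀, I.RejectsDisOnlyAbove μ c (A c)) (ht : t ∈ A c₀) (htdis : t ∈ I.dis) :
    I.pref t (some c₀) ≤ I.pref t (μ t) := by
  by_contra! hlt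
  rcases hc₁ : μ t with _ | c₁
  · rw [hc₁] at hlt
    exact (hlt.trans (hA c₀ t ht).1).false
  rw [hc₁] at hlt
  obtain ⟨ht₁, hrej₁⟩ := (hA c₀ t ht).2 c₁ (hμ.1 t c₁ hc₁) hlt
  have hne : c₁ ≠ c₀ := by rintro rfl; exact hlt.false
  simpa [hc₁] using hother c₁ hne t ht₁ htdis hrej₁

lemma IsOfferState.rejectsDisOnlyAbove (hA : I.IsOfferState A) (hμ : I.IsStable I.CMR μ)
    (hhc : ∀ c, #(I.assigned μ c ∩ I.dis) ≤ I.qR c)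
    (hother : ∀ c ≠ c₀, I.RejectsDisOnlyAbove μ c (A c)) :
    I.RejectsDisOnlyAbove μ c₀ (A c₀) := by
  intro u hu hudis hurej
  by_contra! hle
  have hweak := fun {t} => hA.pref_le_of_forall_ne (t := t) hμ.1 hother
  have hu' : u ∈ I.assigned μ c₀ ∩ I.dis :=
    mem_inter.2 ⟨mem_filter.2 ⟨mem_univ _, I.pref_inj u (le_antisymm hle (hweak hu hudis))⟩,
      hudis⟩
  have hsub : (A c₀ ∩ I.dis).filter (fun t => I.prio c₀ t < I.prio c₀ u) ⊆
      (I.assigned μ c₀ ∩ I.dis).erase u := by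
    intro t ht
    obtain ⟨ht, htu⟩ := mem_filter.1 ht
    obtain ⟨htA, htdis⟩ := mem_inter.1 ht
    have htμ : μ t = some c₀ := by
      rcases (hweak htA htdis).lt_or_eq with hlt | heq
      · exact absurd htu
          (prio_lt_of_isStable_CMR hμ (hhc c₀) htdis (hA c₀ t htA).1 hlt hu').not_gt
      · exact (I.pref_inj t heq).symm
    exact mem_erase.2 ⟨by rintro rfl; exact htu.false,
      mem_inter.2 ⟨mem_filter.2 ⟨mem_univ _, htμ⟩, htdis⟩⟩
  have hcard : I.rank c₀ (A c₀ ∩ I.dis) u ≤ #(I.assigned μ c₀ ∩ I.dis) - 1 :=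
    card_erase_of_mem hu' ▸ card_le_card hsub
  have := qR_le_rank_of_notMem_CJSA hudis hu hurej
  have := hhc c₀
  have := card_pos.2 ⟨u, hu'⟩
  omega

lemma IsOfferState.rejectsDisOnlyAbove_update (hA : I.IsOfferState A) (hμ : I.IsStable I.CMR μ)
    (hhc : ∀ c, #(I.assigned μ c ∩ I.dis) ≤ I.qR c)
    (hinv : ∀ c, I.RejectsDisOnlyAbove μ c (A c)) (hs : I.CanPropose A s c₀) (c : C) :
    I.RejectsDisOnlyAbove μ c (Function.update A c₀ (insert s (A c₀)) c) := by
  have hne :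
      ∀ c ≠ c₀, I.RejectsDisOnlyAbove μ c (Function.update A c₀ (insert s (A c₀)) c) :=
    fun c hc => by rw [Function.update_of_ne hc]; exact hinv c
  rcases eq_or_ne c c₀ with rfl | hc
  · exact (hA.update hs).rejectsDisOnlyAbove hμ hhc hne
  · exact hne c hc

lemma exists_isOfferState_forall_not_canPropose (hμ : I.IsStable I.CMR μ)
    (hhc : ∀ c, #(I.assigned μ c ∩ I.dis) ≤ I.qR c) :
    ∃ A, I.IsOfferState A ∧ (∀ c, I.RejectsDisOnlyAbove μ c (A c)) ∧
      ∀ s c, ¬ I.CanPropose A s c := by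
  have hempty : I.IsOfferState (fun _ => ∅) ∧ ∀ c, I.RejectsDisOnlyAbove μ c ∅ :=
    ⟨fun _ _ h => absurd h (notMem_empty _), fun _ _ h => absurd h (notMem_empty _)⟩
  obtain ⟨A, ⟨hA, hinv⟩, hmax⟩ :=
    (Set.toFinite {A | I.IsOfferState A ∧ ∀ c, I.RejectsDisOnlyAbove μ c (A c)}).exists_maximal
      ⟨_, hempty⟩
  refine ⟨A, hA, hinv, fun s c hs => hs.2.1 ?_⟩
  have := hmax ⟨hA.update hs, hA.rejectsDisOnlyAbove_update hμ hhc hinv hs⟩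
    Finset.le_update_insert
  exact this c (Finset.mem_update_insert.2 (Or.inl ⟨rfl, rfl⟩))

lemma pref_le_pref_none (hμ : I.IsMatching μ) : I.pref s (μ s) ≤ I.pref s none := by
  rcases h : μ s with _ | c
  · exact le_rfl
  · exact (hμ.1 s c h).le

lemma assigned_eq_CJSA (hν : ∀ s c, ν s = some c ↔ s ∈ I.CJSA c (A c)) :
    I.assigned ν c = I.CJSA c (A c) := by
  ext s
  simp [assigned, hν]

lemma isMatching_of_isOfferState (hA : I.IsOfferState A)
    (hν : ∀ s c, ν s = some c ↔ s ∈ I.CJSA c (A c)) : I.IsMatching ν :=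
  ⟨fun s c h => (hA c s (CJSA_subset ((hν s c).1 h))).1,
    fun _ => (assigned_eq_CJSA hν).symm ▸ card_CJSA_le⟩

lemma mem_and_notMem_CJSA_of_pref_lt (hmax : ∀ s c, ¬ I.CanPropose A s c)
    (hν : ∀ s c, ν s = some c ↔ s ∈ I.CJSA c (A c)) (hacc : I.acceptable s c)
    (hlt : I.pref s (some c) < I.pref s (ν s)) : s ∈ A c ∧ s ∉ I.CJSA c (A c) := by
  classical
  have hrej : ∀ c', I.pref s (some c') < I.pref s (ν s) → s ∉ I.CJSA c' (A c') :=
    fun c' hlt' h => by rw [(hν s c').2 h] at hlt'; exact hlt'.false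
  refine ⟨?_, hrej c hlt⟩
  by_contra hsc
  obtain ⟨c₀, hc₀, hmin⟩ := exists_min_image
    (univ.filter fun c' => I.acceptable s c' ∧ s ∉ A c') (fun c' => I.pref s (some c'))
    ⟨c, mem_filter.2 ⟨mem_univ _, hacc, hsc⟩⟩
  simp only [mem_filter, mem_univ, true_and] at hc₀ hmin
  refine hmax s c₀ ⟨hc₀.1, hc₀.2, fun c' hacc' hlt' => ⟨?_, ?_⟩⟩
  · by_contra h
    exact (hmin c' ⟨hacc', h⟩).not_gt hlt'
  · exact hrej c' (hlt'.trans ((hmin c ⟨hacc, hsc⟩).trans_lt hlt))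

lemma isStable_CJSA_of_forall_not_canPropose (hA : I.IsOfferState A)
    (hmax : ∀ s c, ¬ I.CanPropose A s c) (hν : ∀ s c, ν s = some c ↔ s ∈ I.CJSA c (A c)) :
    I.IsStable I.CJSA ν := by
  refine ⟨isMatching_of_isOfferState hA hν, fun s c hacc hlt hs => ?_⟩
  obtain ⟨hsA, hrej⟩ := mem_and_notMem_CJSA_of_pref_lt hmax hν hacc hlt
  rw [assigned_eq_CJSA hν, CJSA_eq_of_subset (subset_insert _ _) (insert_subset hsA CJSA_subset)]
    at hs
  exact hrej hs

lemma pref_le_of_rejectsDisOnlyAbove (hA : I.IsOfferState A)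
    (hmax : ∀ s c, ¬ I.CanPropose A s c) (hν : ∀ s c, ν s = some c ↔ s ∈ I.CJSA c (A c))
    (hμ : I.IsMatching μ) (hinv : ∀ c, I.RejectsDisOnlyAbove μ c (A c)) (hs : s ∈ I.dis) :
    I.pref s (ν s) ≤ I.pref s (μ s) := by
  by_contra! hlt
  rcases hc : μ s with _ | c
  · rw [hc] at hlt
    exact (pref_le_pref_none (isMatching_of_isOfferState hA hν)).not_gt hlt
  rw [hc] at hlt
  obtain ⟨hsA, hrej⟩ := mem_and_notMem_CJSA_of_pref_lt hmax hν (hμ.1 s c hc) hlt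
  simpa [hc] using hinv c s hsA hs hrej

end CumulativeOffer

theorem exists_isStable_CJSA_pref_le {μ : S → Option C} (hμ : I.IsStable I.CMR μ)
    (hhc : ∀ c, #(I.assigned μ c ∩ I.dis) ≤ I.qR c) :
    ∃ ν, I.IsStable I.CJSA ν ∧ ∀ s ∈ I.dis, I.pref s (ν s) ≤ I.pref s (μ s) := by
  obtain ⟨A, hA, hinv, hmax⟩ := exists_isOfferState_forall_not_canPropose hμ hhc
  obtain ⟨ν, hν⟩ := exists_option_eq_some_iff (fun s c => s ∈ I.CJSA c (A c))
    fun _ _ _ => hA.eq_of_mem_CJSA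
  exact ⟨ν, isStable_CJSA_of_forall_not_canPropose hA hmax hν,
    fun s hs => pref_le_of_rejectsDisOnlyAbove hA hmax hν hμ.1 hinv hs⟩

end SchoolChoice

/-- in a highly competitive market, μ^JSA weakly dominates μ^MR for
disadvantaged students. -/
theorem JSA_dominates_MR_highly_competitive {S C : Type*} [Fintype S] [DecidableEq S] [Fintype C] [DecidableEq C]
    (I : SchoolChoice S C) (μMR μJ : S → Option C)
    (hMR : I.IsOptStable I.CMR μMR) (hJ : I.IsOptStable I.CJSA μJ)
    (hhc : ∀ c : C, (I.assigned μMR c ∩ I.dis).card ≤ I.qR c) :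
    ∀ s ∈ I.dis, I.pref s (μJ s) ≤ I.pref s (μMR s) := by
  obtain ⟨ν, hν, hdom⟩ := SchoolChoice.exists_isStable_CJSA_pref_le hMR.1 hhc
  exact fun s hs => (hJ.2 ν hν s).trans (hdom s hs)
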